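/- arXiv:2201.02355 — 3 statements merged into one kernel-verified Lean document; each statement's English description precedes it below -/
import Mathlib

section
/- (Convergence to the mean: decay of the complementary modes.) Let N ≥ 1, let Ω be a real N×N projector matrix (Ω² = Ω), let α ∈ ℝ, and let g : ℝ → ℝ^N satisfy (I − Ω)·g(t) = 0 for all t. Suppose X : ℝ → ℝ^N is differentiable with X′(t) = g(t) − α·(I − Ω)·X(t) for all t. Then for all t, (I − Ω)·X(t) = e^{−αt} · (I − Ω)·X(0). -/
/-- **Convergence to the mean: decay of the complementary modes.** If `Ω` is a
projector, `g` takes values in the range of `Ω` (i.e. `(I - Ω) g(t) = 0` for all `t`),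
and `X' (t) = g(t) - α (I - Ω) X(t)`, then
`(I - Ω) X(t) = e^{-α t} (I - Ω) X(0)` for all `t`. -/
theorem stmt_5 (N : ℕ) (hN : 1 ≤ N) (Ω : Matrix (Fin N) (Fin N) ℝ)
    (hΩ : Ω * Ω = Ω) (α : ℝ) (g : ℝ → (Fin N → ℝ))
    (hg : ∀ t, ((1 : Matrix (Fin N) (Fin N) ℝ) - Ω).mulVec (g t) = 0)
    (X : ℝ → (Fin N → ℝ))
    (hX : ∀ t, HasDerivAt X
      (g t - α • ((1 : Matrix (Fin N) (Fin N) ℝ) - Ω).mulVec (X t)) t) :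
    ∀ t, ((1 : Matrix (Fin N) (Fin N) ℝ) - Ω).mulVec (X t) =
      Real.exp (-α * t) • ((1 : Matrix (Fin N) (Fin N) ℝ) - Ω).mulVec (X 0) := by
  set M : Matrix (Fin N) (Fin N) ℝ := (1 : Matrix (Fin N) (Fin N) ℝ) - Ω with hM
  have hMM : M * M = M := by
    simp [hM, sub_mul, mul_sub, hΩ]
  set y : ℝ → (Fin N → ℝ) := fun t => M.mulVec (X t) with hy
  -- derivative of y
  have hyder : ∀ t, HasDerivAt y (-α • y t) t := by
    intro t
    have hlin : HasDerivAt y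
        (M.mulVec (g t - α • M.mulVec (X t))) t := by
      have := (M.mulVecLin.toContinuousLinearMap.hasFDerivAt).comp_hasDerivAt t (hX t)
      simpa [y, Function.comp_def] using this
    have : M.mulVec (g t - α • M.mulVec (X t)) = -α • y t := by
      have h2 : M.mulVec (M.mulVec (X t)) = M.mulVec (X t) := by
        rw [Matrix.mulVec_mulVec, hMM]
      simp [Matrix.mulVec_sub, hg t, Matrix.mulVec_smul, h2, y, neg_smul]
    rwa [this] at hlin
  -- h t = exp(α t) • y t is constant
  set h : ℝ → (Fin N → ℝ) := fun t => Real.exp (α * t) • y t with hh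
  have hhder : ∀ t, HasDerivAt h 0 t := by
    intro t
    have he : HasDerivAt (fun t => Real.exp (α * t)) (α * Real.exp (α * t)) t := by
      have := (Real.hasDerivAt_exp (α * t)).comp t ((hasDerivAt_id t).const_mul α)
      simpa [mul_comm, Function.comp_def] using this
    have := he.smul (hyder t)
    rw [smul_smul, ← add_smul, show Real.exp (α * t) * -α + α * Real.exp (α * t) = 0 by ring, zero_smul] at this
    exact this
  have hconst : ∀ t, h t = h 0 := by
    intro t
    have : ∀ s, deriv h s = 0 := fun s => (hhder s).deriv
    exact is_const_of_deriv_eq_zero (fun s => (hhder s).differentiableAt) this t 0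
  intro t
  have ht := hconst t
  have : Real.exp (α * t) • y t = y 0 := by simpa [h] using ht
  have := congrArg (fun v => Real.exp (-α * t) • v) this
  simpa [smul_smul, ← Real.exp_add, neg_mul] using this
end

section
/- Let N ≥ 1, let Ω be a real symmetric N×N projector matrix (Ωᵀ = Ω and Ω² = Ω), and let D = diag(α₁,…,α_N) be a diagonal matrix with strictly positive diagonal entries. If v ∈ ℝ^N satisfies (I − Ω)v = v, then exp(−t·(I − Ω)D)·v tends to the zero vector as t → +∞. -/
open NormedSpace Matrix

/-- If `Ω` is a symmetric projector and `D = diag(α₁,…,α_N)` with `αᵢ > 0`, then for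
any `v` in the range of `I - Ω` (i.e. `(I - Ω) v = v`), the solution
`exp(-t (I - Ω) D) v` tends to `0` as `t → +∞`. -/
theorem stmt_7 (N : ℕ) (hN : 1 ≤ N) (Ω : Matrix (Fin N) (Fin N) ℝ)
    (hΩsymm : Ωᵀ = Ω) (hΩ : Ω * Ω = Ω) (α : Fin N → ℝ) (hα : ∀ i, 0 < α i)
    (v : Fin N → ℝ)
    (hv : ((1 : Matrix (Fin N) (Fin N) ℝ) - Ω).mulVec v = v) :
    Filter.Tendsto
      (fun t : ℝ =>
        (NormedSpace.exp (-(t • (((1 : Matrix (Fin N) (Fin N) ℝ) - Ω) * Matrix.diagonal α)))).mulVec v)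
      Filter.atTop (nhds 0) := by
  set P : Matrix (Fin N) (Fin N) ℝ := 1 - Ω with hP
  have hPsymm : Pᵀ = P := by simp [hP, transpose_sub, hΩsymm]
  have hPP : P * P = P := by
    simp only [hP, sub_mul, mul_sub, one_mul, mul_one, hΩ]
    rw [sub_self, sub_zero]
  set S : Matrix (Fin N) (Fin N) ℝ := diagonal (fun i => Real.sqrt (α i)) with hS
  set Sinv : Matrix (Fin N) (Fin N) ℝ := diagonal (fun i => (Real.sqrt (α i))⁻¹) with hSinv
  have hsqrt_ne : ∀ i, Real.sqrt (α i) ≠ 0 := fun i =>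
    ne_of_gt (Real.sqrt_pos.mpr (hα i))
  have hSSinv : S * Sinv = 1 := by
    rw [hS, hSinv, diagonal_mul_diagonal, ← diagonal_one]
    exact congrArg diagonal (funext fun i => mul_inv_cancel₀ (hsqrt_ne i))
  have hSinvS : Sinv * S = 1 := by
    rw [hS, hSinv, diagonal_mul_diagonal, ← diagonal_one]
    exact congrArg diagonal (funext fun i => inv_mul_cancel₀ (hsqrt_ne i))
  have hSS : S * S = diagonal α := by
    rw [hS, diagonal_mul_diagonal]
    exact congrArg diagonal (funext fun i => Real.mul_self_sqrt (hα i).le)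
  have hSsymm : Sᵀ = S := by simp [hS]
  set M : Matrix (Fin N) (Fin N) ℝ := S * P * S with hM
  -- M is hermitian
  have hMherm : M.IsHermitian := by
    have : Mᵀ = M := by
      rw [hM, transpose_mul, transpose_mul, hSsymm, hPsymm]
      rw [mul_assoc]
    rw [Matrix.IsHermitian, conjTranspose_eq_transpose_of_trivial]
    exact this
  -- M is positive semidefinite
  have hMfact : M = (P * S)ᵀ * (P * S) := by
    rw [transpose_mul, hSsymm, hPsymm, hM, mul_assoc, mul_assoc, ← mul_assoc P P S, hPP]
  have hMpsd : M.PosSemidef := by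
    have := posSemidef_conjTranspose_mul_self (P * S)
    rwa [conjTranspose_eq_transpose_of_trivial, ← hMfact] at this
  -- units
  let U : (Matrix (Fin N) (Fin N) ℝ)ˣ := ⟨Sinv, S, hSinvS, hSSinv⟩
  have hconj : ∀ t : ℝ, -(t • (P * diagonal α)) = (U : Matrix (Fin N) (Fin N) ℝ) *
      (-(t • M)) * ((U⁻¹ : (Matrix (Fin N) (Fin N) ℝ)ˣ) : Matrix (Fin N) (Fin N) ℝ) := by
    intro t
    have : Sinv * (-(t • M)) * S = -(t • (Sinv * M * S)) := by
      rw [Matrix.mul_neg, Matrix.neg_mul, Matrix.mul_smul, Matrix.smul_mul]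
    show -(t • (P * diagonal α)) = Sinv * (-(t • M)) * S
    rw [this]
    congr 2
    rw [hM, ← mul_assoc, ← mul_assoc, hSinvS, one_mul, mul_assoc, hSS]
  -- the unitary and eigenvalues
  set Uu : Matrix (Fin N) (Fin N) ℝ := (hMherm.eigenvectorUnitary : Matrix (Fin N) (Fin N) ℝ)
    with hUu
  set μ : Fin N → ℝ := hMherm.eigenvalues with hμ
  have hspec : M = Uu * diagonal μ * star Uu := by
    have := hMherm.spectral_theorem
    simpa using this
  -- units for Uu
  have hUuStar : Uu * star Uu = 1 :=
    Matrix.mem_unitaryGroup_iff.mp hMherm.eigenvectorUnitary.2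
  have hStarUu : star Uu * Uu = 1 :=
    Matrix.mem_unitaryGroup_iff'.mp hMherm.eigenvectorUnitary.2
  let W : (Matrix (Fin N) (Fin N) ℝ)ˣ := ⟨Uu, star Uu, hUuStar, hStarUu⟩
  -- compute the exponential
  have hexpM : ∀ t : ℝ, NormedSpace.exp (-(t • M)) =
      Uu * diagonal (fun i => Real.exp (-(t * μ i))) * star Uu := by
    intro t
    have hMW : -(t • M) = (W : Matrix (Fin N) (Fin N) ℝ) * (-(t • diagonal μ)) *
        ((W⁻¹ : (Matrix (Fin N) (Fin N) ℝ)ˣ) : Matrix (Fin N) (Fin N) ℝ) := by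
      show -(t • M) = Uu * (-(t • diagonal μ)) * star Uu
      rw [hspec, Matrix.mul_neg, Matrix.neg_mul, Matrix.mul_smul, Matrix.smul_mul]
    rw [hMW, Matrix.exp_units_conj]
    show Uu * NormedSpace.exp (-(t • diagonal μ)) * star Uu = _
    have hdiag : -(t • diagonal μ) = diagonal (fun i => -(t * μ i)) := by
      rw [← Matrix.diagonal_smul, ← Matrix.diagonal_neg]
      rfl
    rw [hdiag, Matrix.exp_diagonal]
    have hexpPi : (NormedSpace.exp fun i => -(t * μ i)) = fun i => Real.exp (-(t * μ i)) := by
      funext i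
      rw [Pi.exp_def, Real.exp_eq_exp_ℝ]
    rw [hexpPi]
  have hexp : ∀ t : ℝ, NormedSpace.exp (-(t • (P * diagonal α))) =
      Sinv * Uu * diagonal (fun i => Real.exp (-(t * μ i))) * (star Uu * S) := by
    intro t
    rw [hconj t, Matrix.exp_units_conj]
    show Sinv * NormedSpace.exp (-(t • M)) * S = _
    rw [hexpM t]
    simp only [Matrix.mul_assoc]
  -- the coefficient vector
  set c : Fin N → ℝ := (star Uu * S).mulVec v with hc
  -- vanishing coefficients for zero eigenvalues
  have hczero : ∀ i, μ i = 0 → c i = 0 := by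
    intro i hμi
    set u : Fin N → ℝ := ⇑(hMherm.eigenvectorBasis i) with hu
    have hMu : M.mulVec u = 0 := by
      rw [hu, hMherm.mulVec_eigenvectorBasis, ← hμ, hμi, zero_smul]
    -- (P*S) *ᵥ u = 0
    have hPSu : (P * S).mulVec u = 0 := by
      have h0 : dotProduct ((P * S).mulVec u) ((P * S).mulVec u) = 0 := by
        have h1 : dotProduct u (M.mulVec u) = 0 := by rw [hMu, dotProduct_zero]
        rw [hMfact] at h1
        rw [← Matrix.mulVec_mulVec, Matrix.dotProduct_mulVec, Matrix.vecMul_transpose] at h1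
        exact h1
      exact dotProduct_self_eq_zero.mp h0
    -- c i = (S *ᵥ u) ⬝ᵥ v
    have hci : c i = dotProduct (S.mulVec u) v := by
      rw [hc, ← Matrix.mulVec_mulVec]
      show dotProduct (fun j => (star Uu) i j) (S.mulVec v) = _
      have hrow : (fun j => (star Uu) i j) = u := by
        funext j
        simp [hUu, hu, Matrix.star_apply]
      rw [hrow]
      simp only [dotProduct, Matrix.mulVec_diagonal, hS]
      exact Finset.sum_congr rfl fun k _ => by ring
    rw [hci, ← hv, Matrix.dotProduct_mulVec, ← hPsymm, Matrix.vecMul_transpose,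
      Matrix.mulVec_mulVec, hPSu, zero_dotProduct]
  -- rewrite the function
  have hfun : ∀ t : ℝ, (NormedSpace.exp (-(t • (P * diagonal α)))).mulVec v =
      (Sinv * Uu).mulVec (fun i => Real.exp (-(t * μ i)) * c i) := by
    intro t
    rw [hexp t, ← Matrix.mulVec_mulVec, ← Matrix.mulVec_mulVec]
    have hdg : (diagonal (fun i => Real.exp (-(t * μ i)))) *ᵥ ((star Uu * S) *ᵥ v) =
        fun i => Real.exp (-(t * μ i)) * c i := by
      funext i
      rw [Matrix.mulVec_diagonal]
    rw [hdg]
  simp only [hfun]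
  -- tendsto
  have hinner : Filter.Tendsto (fun t : ℝ => (fun i => Real.exp (-(t * μ i)) * c i))
      Filter.atTop (nhds 0) := by
    rw [tendsto_pi_nhds]
    intro i
    rcases (hMpsd.eigenvalues_nonneg i).lt_or_eq with hpos | hzero
    · have h1 : Filter.Tendsto (fun t : ℝ => t * μ i) Filter.atTop Filter.atTop :=
        Filter.tendsto_id.atTop_mul_const hpos
      have h2 : Filter.Tendsto (fun t : ℝ => Real.exp (-(t * μ i))) Filter.atTop (nhds 0) :=
        (Real.tendsto_exp_neg_atTop_nhds_zero).comp h1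
      have := h2.mul_const (c i)
      rwa [zero_mul] at this
    · have : c i = 0 := hczero i hzero.symm
      simp only [this, mul_zero]
      exact tendsto_const_nhds
  have hcont : Continuous ((Sinv * Uu).mulVecLin) :=
    LinearMap.continuous_of_finiteDimensional _
  have := (hcont.tendsto 0).comp hinner
  rw [map_zero] at this
  exact this
end

section
/- (Multivariate banality of the mean value, part (b): fixed points of the extended system are fixed points of the target system.) Let N ≥ 1, m ≥ 1, let Ω₁ be the N×N uniform mean field projector (all entries 1/N), let α > 0, and let f_i : ℝ^m → ℝ for i = 1,…,m. Suppose X₁*,…,X_m* ∈ ℝ^N satisfy, for every i, Ω₁·(f_i(X_{1,j}*,…,X_{m,j}*))_{j=1,…,N} − α·(I − Ω₁)·X_i* = 0 (the fixed point equation of the extended system with the standard commutative map and standard decay function). Then there exists x* ∈ ℝ^m such that X_i* = x_i*·𝟙 for every i, and f_i(x*) = 0 for every i; i.e., the projections 𝒫_{Ω₁}X_i* form a fixed point of the target system. -/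
/-- **Multivariate banality of the mean value, part (b).** For the uniform mean field
projector `Ω₁` (all entries `1/N`) and `α > 0`, any fixed point `X₁*,…,X_m*` of the
extended system with the standard commutative map and standard decay function, i.e.
`Ω₁·(f_i(X_{1,j}*,…,X_{m,j}*))_j - α (I - Ω₁) X_i* = 0` for all `i`, is uniform:
there exists `x* ∈ ℝ^m` with `X_i* = x_i*·𝟙` and `f_i(x*) = 0` for every `i`. -/
theorem stmt_9 (N m : ℕ) (hN : 1 ≤ N) (hm : 1 ≤ m)
    (Ω₁ : Matrix (Fin N) (Fin N) ℝ) (hΩ₁ : ∀ i j, Ω₁ i j = 1 / N)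
    (α : ℝ) (hα : 0 < α) (f : Fin m → (Fin m → ℝ) → ℝ)
    (Xstar : Fin m → Fin N → ℝ)
    (hfix : ∀ i, Ω₁.mulVec (fun j => f i (fun s => Xstar s j)) -
      α • ((1 : Matrix (Fin N) (Fin N) ℝ) - Ω₁).mulVec (Xstar i) = 0) :
    ∃ xstar : Fin m → ℝ,
      (∀ i, Xstar i = fun _ => xstar i) ∧ ∀ i, f i xstar = 0 := by
  have hNpos : 0 < N := hN
  have hN0 : (N:ℝ) ≠ 0 := by positivity
  have key : ∀ i j, (∑ k, (1/(N:ℝ)) * f i (fun s => Xstar s k)) -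
      α * (Xstar i j - ∑ k, (1/(N:ℝ)) * Xstar i k) = 0 := by
    intro i j
    have h := congrFun (hfix i) j
    simpa [Matrix.mulVec, dotProduct, hΩ₁, Matrix.sub_apply, Matrix.one_apply,
      sub_mul, Finset.sum_sub_distrib, Finset.sum_ite_eq, mul_sub] using h
  have hconst : ∀ i j j', Xstar i j = Xstar i j' := by
    intro i j j'
    have h1 := key i j
    have h2 := key i j'
    have : α * Xstar i j = α * Xstar i j' := by ring_nf; ring_nf at h1 h2; linarith
    exact mul_left_cancel₀ (ne_of_gt hα) this
  set j0 : Fin N := ⟨0, hNpos⟩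
  refine ⟨fun i => Xstar i j0, fun i => funext fun j => hconst i j j0, fun i => ?_⟩
  have h := key i j0
  have hx : ∀ k, Xstar i k = Xstar i j0 := fun k => hconst i k j0
  have hfk : ∀ k : Fin N, f i (fun s => Xstar s k) = f i (fun s => Xstar s j0) := by
    intro k; congr 1; funext s; exact hconst s k j0
  simp only [hfk, hx] at h
  simp only [Finset.sum_const, Finset.card_univ, Fintype.card_fin, nsmul_eq_mul] at h
  have : (N:ℝ) * ((1/(N:ℝ)) * f i (fun s => Xstar s j0)) = f i (fun s => Xstar s j0) := by
    field_simp
  rw [this] at h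
  have h2 : (N:ℝ) * ((1/(N:ℝ)) * Xstar i j0) = Xstar i j0 := by field_simp
  rw [h2] at h
  simpa using h
end
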